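/- (Splittability of II* into I₈ + I₁ + I₁) There exist matrices C, B₁, B₂ ∈ SL(2,ℤ) with C conjugate in SL(2,ℤ) to A_{I₈} = [[1,8],[0,1]] and B₁, B₂ each conjugate to A_{I₁} = [[1,1],[0,1]], such that the product C·B₁·B₂ is conjugate in SL(2,ℤ) to A_{II*} = [[0,-1],[1,1]]. In other words, the fiber type II* admits a monodromy decomposition into I₈ + I₁ + I₁. -/

import Mathlib

/-- The special linear group `SL(2, ℤ)`. -/
abbrev SL2Z := Matrix.SpecialLinearGroup (Fin 2) ℤ

/-- `A` is conjugate to `B` in `SL(2, ℤ)`: there is `P ∈ SL(2,ℤ)` with `P * A * P⁻¹ = B`. -/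
def ConjTo (A B : SL2Z) : Prop := ∃ P : SL2Z, P * A * P⁻¹ = B

/-- The standard monodromy matrix `A_{I_n} = [[1,n],[0,1]]`. -/
def AI (n : ℤ) : SL2Z := ⟨!![1, n; 0, 1], by simp [Matrix.det_fin_two_of]⟩

/-- The standard monodromy matrix `A_{II} = [[1,1],[-1,0]]`. -/
def AII : SL2Z := ⟨!![1, 1; -1, 0], by norm_num [Matrix.det_fin_two_of]⟩

/-- The standard monodromy matrix `A_{III} = [[0,1],[-1,0]]`. -/
def AIII : SL2Z := ⟨!![0, 1; -1, 0], by norm_num [Matrix.det_fin_two_of]⟩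

/-- The standard monodromy matrix `A_{IV} = [[0,1],[-1,-1]]`. -/
def AIV : SL2Z := ⟨!![0, 1; -1, -1], by norm_num [Matrix.det_fin_two_of]⟩

/-- The standard monodromy matrix `A_{I₀*} = -I`. -/
def negI : SL2Z := ⟨!![-1, 0; 0, -1], by norm_num [Matrix.det_fin_two_of]⟩

/-- The standard monodromy matrix `A_{I_n*} = -[[1,n],[0,1]]`. -/
def AIstar (n : ℤ) : SL2Z := ⟨!![-1, -n; 0, -1], by simp [Matrix.det_fin_two_of]⟩

/-- The standard monodromy matrix `A_{IV*} = [[-1,-1],[1,0]]`. -/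
def AIVstar : SL2Z := ⟨!![-1, -1; 1, 0], by norm_num [Matrix.det_fin_two_of]⟩

/-- The standard monodromy matrix `A_{III*} = [[0,-1],[1,0]]`. -/
def AIIIstar : SL2Z := ⟨!![0, -1; 1, 0], by norm_num [Matrix.det_fin_two_of]⟩

/-- The standard monodromy matrix `A_{II*} = [[0,-1],[1,1]]`. -/
def AIIstar : SL2Z := ⟨!![0, -1; 1, 1], by norm_num [Matrix.det_fin_two_of]⟩

/-! The conjugates of `A_{I_n}` are the shears `I + n v v^⊥` along primitive vectors `v = (a, c)`.
Along `v = (3, -1)` and `v = (3, -2)` the two `I₁` shears multiply to `A_{I₈}⁻¹ A_{II*}`,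
so `A_{I₈}` followed by them is exactly `A_{II*}`. -/

def shearAlong (n a c : ℤ) : SL2Z :=
  ⟨!![1 - n * a * c, n * a ^ 2; -n * c ^ 2, 1 + n * a * c], by
    simp only [Matrix.det_fin_two_of]; ring⟩

lemma ConjTo.refl (A : SL2Z) : ConjTo A A :=
  ⟨1, by simp⟩

lemma conjTo_of_mul_eq_mul {A B : SL2Z} (P : SL2Z) (h : A * P = P * B) : ConjTo A B :=
  ⟨P⁻¹, by rw [inv_inv, mul_assoc, h, inv_mul_cancel_left]⟩

lemma conjTo_shearAlong_AI (n : ℤ) {a c : ℤ} (h : IsCoprime a c) :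
    ConjTo (shearAlong n a c) (AI n) := by
  obtain ⟨u, w, huw⟩ := h
  -- `P` has first column `v`, so it carries `A_{I_n}` to the shear along `v`.
  let P : SL2Z := ⟨!![a, -w; c, u], by
    simp only [Matrix.det_fin_two_of]; linear_combination huw⟩
  refine conjTo_of_mul_eq_mul P ?_
  ext i j
  rw [Matrix.SpecialLinearGroup.coe_mul, Matrix.SpecialLinearGroup.coe_mul]
  simp only [P, shearAlong, AI, Matrix.SpecialLinearGroup.coe_mk, Matrix.mul_fin_two]
  fin_cases i <;> fin_cases j <;>
    simp only [Fin.zero_eta, Fin.mk_one, Matrix.of_apply, Matrix.cons_val', Matrix.cons_val_zero,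
      Matrix.cons_val_one, Matrix.cons_val_fin_one]
  · ring
  · linear_combination (n * a) * huw
  · ring
  · linear_combination (n * c) * huw

lemma AI_eight_mul_shearAlong_mul_shearAlong :
    AI 8 * shearAlong 1 3 (-1) * shearAlong 1 3 (-2) = AIIstar := by
  ext i j
  fin_cases i <;> fin_cases j <;> rfl

/-- The fiber type `II*` admits a monodromy decomposition into `I₈ + I₁ + I₁`. -/
theorem IIstar_decomposition_I8_I1_I1 :
    ∃ C B₁ B₂ : SL2Z, ConjTo C (AI 8) ∧ ConjTo B₁ (AI 1) ∧ ConjTo B₂ (AI 1) ∧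
      ConjTo (C * B₁ * B₂) AIIstar :=
  ⟨AI 8, shearAlong 1 3 (-1), shearAlong 1 3 (-2), ConjTo.refl _,
    conjTo_shearAlong_AI 1 ⟨0, -1, by norm_num⟩, conjTo_shearAlong_AI 1 ⟨1, 1, by norm_num⟩,
    AI_eight_mul_shearAlong_mul_shearAlong ▸ ConjTo.refl _⟩
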